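/- If s = 2^{i+j} and k = 2^i (so s ≥ k), then the extremal s-range satisfies n_s(k) ≥ (1 + s/k)^k - 1. -/

import Mathlib

/-- `i` is a sum of at most `s` elements of `A` (with repetition). -/
def Reachable (A : Finset ℕ) (s i : ℕ) : Prop :=
  ∃ f : ℕ → ℕ, (∑ x ∈ A, f x) ≤ s ∧ (∑ x ∈ A, f x * x) = i

/-- The s-range of a stamp basis `A`. -/
noncomputable def srange (A : Finset ℕ) (s : ℕ) : ℕ :=
  sSup {n | ∀ i, 1 ≤ i → i ≤ n → Reachable A s i}

/-- The extremal s-range over bases of `k` distinct positive denominations. -/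
noncomputable def exrange (k s : ℕ) : ℕ :=
  sSup {n | ∃ A : Finset ℕ, A.card = k ∧ (∀ a ∈ A, 0 < a) ∧ n = srange A s}
/-!
Take the powers `1, q, …, q^(k-1)` of `q = 1 + ⌊s/k⌋` as denominations. Every `m < q^k` is
the sum of its base-`q` digits times these powers, using at most `k (q - 1) ≤ s` stamps, so
the basis has `s`-range at least `q^k - 1`.
-/

open Finset

lemma sum_range_div_pow_mod_mul_pow (q k m : ℕ) :
    ∑ t ∈ range k, m / q ^ t % q * q ^ t = m % q ^ k := by
  induction k with
  | zero => simp [Nat.mod_one]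
  | succ k ih =>
    rw [sum_range_succ, ih, Nat.mod_pow_succ]
    ring

lemma reachable_of_lt_pow {q k s m : ℕ} (hq : 2 ≤ q) (hks : k * (q - 1) ≤ s)
    (hm : m < q ^ k) :
    Reachable ((range k).image (q ^ ·)) s m := by
  have hinj : Set.InjOn (q ^ ·) (range k) := (Nat.pow_right_injective hq).injOn
  refine ⟨fun a => m / a % q, ?_, ?_⟩
  · rw [sum_image hinj]
    calc ∑ t ∈ range k, m / q ^ t % q
        ≤ ∑ _t ∈ range k, (q - 1) :=
          sum_le_sum fun t _ => Nat.le_sub_one_of_lt (Nat.mod_lt _ (by omega))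
      _ = k * (q - 1) := by rw [sum_const, card_range, smul_eq_mul]
      _ ≤ s := hks
  · rw [sum_image hinj, sum_range_div_pow_mod_mul_pow, Nat.mod_eq_of_lt hm]

def stampSums (A : Finset ℕ) (s : ℕ) : Finset ℕ :=
  (Fintype.piFinset fun _ : A => range (s + 1)).image fun c => ∑ x : A, c x * (x : ℕ)

lemma card_stampSums_le (A : Finset ℕ) (s : ℕ) : (stampSums A s).card ≤ (s + 1) ^ A.card :=
  card_image_le.trans_eq (by simp)

lemma Reachable.mem_stampSums {A : Finset ℕ} {s m : ℕ} (h : Reachable A s m) :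
    m ∈ stampSums A s := by
  obtain ⟨f, hf, rfl⟩ := h
  refine mem_image.2 ⟨fun x => f x, Fintype.mem_piFinset.2 fun x => ?_, ?_⟩
  · exact mem_range_succ_iff.2 ((single_le_sum (fun _ _ => Nat.zero_le _) x.2).trans hf)
  · exact sum_coe_sort A fun x => f x * x

/- `sSup` of an unbounded set of naturals is `0`, so every comparison with `srange` and `exrange`
rests on this bound, uniform in the basis of a given size. -/
lemma le_pow_card_of_reachable {A : Finset ℕ} {s n : ℕ}
    (h : ∀ i, 1 ≤ i → i ≤ n → Reachable A s i) : n ≤ (s + 1) ^ A.card :=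
  calc n = (Icc 1 n).card := by simp
    _ ≤ (stampSums A s).card :=
      card_le_card fun i hi => (h i (mem_Icc.1 hi).1 (mem_Icc.1 hi).2).mem_stampSums
    _ ≤ (s + 1) ^ A.card := card_stampSums_le A s

lemma le_srange {A : Finset ℕ} {s n : ℕ} (h : ∀ i, 1 ≤ i → i ≤ n → Reachable A s i) :
    n ≤ srange A s :=
  le_csSup ⟨_, fun _ => le_pow_card_of_reachable⟩ h

lemma srange_le_pow_card (A : Finset ℕ) (s : ℕ) : srange A s ≤ (s + 1) ^ A.card :=
  csSup_le ⟨0, fun _ h1 h2 => absurd (h1.trans h2) (by norm_num)⟩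
    fun _ => le_pow_card_of_reachable

lemma srange_le_exrange {A : Finset ℕ} {k : ℕ} (hcard : A.card = k) (hpos : ∀ a ∈ A, 0 < a)
    (s : ℕ) : srange A s ≤ exrange k s := by
  refine le_csSup ⟨(s + 1) ^ k, ?_⟩ ⟨A, hcard, hpos, rfl⟩
  rintro _ ⟨B, rfl, -, rfl⟩
  exact srange_le_pow_card B s

lemma pow_sub_one_le_exrange {q k s : ℕ} (hq : 2 ≤ q) (hks : k * (q - 1) ≤ s) :
    q ^ k - 1 ≤ exrange k s := by
  have hcard : ((range k).image (q ^ ·)).card = k := by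
    rw [card_image_of_injective _ (Nat.pow_right_injective hq), card_range]
  have hpos : ∀ a ∈ (range k).image (q ^ ·), 0 < a := by
    simp only [mem_image]
    rintro _ ⟨t, -, rfl⟩
    positivity
  calc q ^ k - 1 ≤ srange ((range k).image (q ^ ·)) s :=
        le_srange fun m _ hm =>
          reachable_of_lt_pow hq hks (Nat.lt_of_le_sub_one (by positivity) hm)
    _ ≤ exrange k s := srange_le_exrange hcard hpos s

theorem midpoint_lower_s_ge_k_general (k s : ℕ) :
    exrange k s ≥ (1 + s / k) ^ k - 1 := by
  rcases Nat.eq_zero_or_pos (s / k) with h | h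
  · simp [h]
  · exact pow_sub_one_le_exrange (by omega) (by simpa using Nat.mul_div_le s k)

theorem midpoint_lower_s_ge_k (i j k s : ℕ) (hs : s = 2 ^ (i + j)) (hk : k = 2 ^ i) :
    exrange k s ≥ (1 + s / k) ^ k - 1 :=
  midpoint_lower_s_ge_k_general k s
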